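/- (LASSO L2 and L1 error bounds under restricted eigenvalue.) In the setting of the basic LASSO inequality, suppose additionally that for every a in the cone {a : ‖a_{S^c}‖₁ ≤ 3‖a_S‖₁} one has (1/n) Σ_{t=1}^n ‖Z_t^⊤ a‖₂² ≥ (α/2) ‖a‖₂² for some α > 0. Then ‖β₀ − β̂‖₂ ≤ 3γ√s/α and ‖β₀ − β̂‖₁ ≤ 12γ s/α, where s = |S|. -/

import Mathlib

/-!
Write `Δ = β₀ - β̂`. Comparing the LASSO objective at `β̂` and at `β₀` and expanding the squares
gives the basic inequality `(1/n)∑‖Z_tᵀΔ‖² + 2⟨Δ, (1/n)∑ Z_t u_t⟩ ≤ γ(‖β₀‖₁ - ‖β̂‖₁)`. The noise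
term is at least `-(γ/2)‖Δ‖₁` by Hölder, and since `β₀` vanishes off `S` the penalty difference is
at most `‖Δ_S‖₁ - ‖Δ_{Sᶜ}‖₁`. Hence `(1/n)∑‖Z_tᵀΔ‖² + (γ/2)‖Δ_{Sᶜ}‖₁ ≤ (3γ/2)‖Δ_S‖₁`, so `Δ`
lies in the cone and the restricted eigenvalue condition gives `(α/2)‖Δ‖₂² ≤ (3γ/2)√s‖Δ‖₂`.
The `ℓ₁` bound follows from `‖Δ‖₁ ≤ 4‖Δ_S‖₁ ≤ 4√s‖Δ‖₂`.
-/

open Matrix Finset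

section

variable {ι κ τ : Type*} [Fintype ι] [Fintype κ] [Fintype τ]

theorem sum_sq_sub_vecMul_of_eq_add {β₀ b : ι → ℝ} {Z : Matrix ι κ ℝ} {y u : κ → ℝ}
    (hy : y = vecMul β₀ Z + u) :
    ∑ j, (y j - vecMul b Z j) ^ 2
      = ∑ j, (vecMul (β₀ - b) Z j) ^ 2 + 2 * ((β₀ - b) ⬝ᵥ (Z *ᵥ u))
        + ∑ j, (y j - vecMul β₀ Z j) ^ 2 := by
  have hu : ∀ j, y j - vecMul β₀ Z j = u j := by simp [hy]
  have hres : ∀ j, y j - vecMul b Z j = vecMul (β₀ - b) Z j + u j := by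
    intro j
    rw [sub_vecMul, ← hu, Pi.sub_apply]
    ring
  rw [dotProduct_mulVec]
  simp only [hres, hu, add_sq, sum_add_distrib, dotProduct, mul_sum, mul_assoc]

theorem lasso_basic_inequality {c γ : ℝ} {y u : τ → κ → ℝ} {Z : τ → Matrix ι κ ℝ}
    {β₀ βhat : ι → ℝ} (hmodel : ∀ t, y t = vecMul β₀ (Z t) + u t)
    (hmin : c * ∑ t, ∑ j, (y t j - vecMul βhat (Z t) j) ^ 2 + γ * ∑ i, |βhat i|
      ≤ c * ∑ t, ∑ j, (y t j - vecMul β₀ (Z t) j) ^ 2 + γ * ∑ i, |β₀ i|) :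
    c * ∑ t, ∑ j, (vecMul (β₀ - βhat) (Z t) j) ^ 2
        + 2 * ((β₀ - βhat) ⬝ᵥ fun i => c * ∑ t, (Z t *ᵥ u t) i)
      ≤ γ * (∑ i, |β₀ i| - ∑ i, |βhat i|) := by
  have hcross : ((β₀ - βhat) ⬝ᵥ fun i => c * ∑ t, (Z t *ᵥ u t) i)
      = c * ∑ t, (β₀ - βhat) ⬝ᵥ (Z t *ᵥ u t) := by
    simp only [dotProduct, mul_sum]
    rw [sum_comm]
    exact sum_congr rfl fun _ _ => sum_congr rfl fun _ _ => by ring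
  rw [sum_congr rfl fun t _ => sum_sq_sub_vecMul_of_eq_add (b := βhat) (hmodel t)] at hmin
  simp only [sum_add_distrib, ← mul_sum] at hmin
  rw [hcross]
  linarith

theorem abs_dotProduct_le_sum_abs_mul {x w : ι → ℝ} {M : ℝ} (hw : ∀ i, |w i| ≤ M) :
    |x ⬝ᵥ w| ≤ (∑ i, |x i|) * M :=
  calc |x ⬝ᵥ w| ≤ ∑ i, |x i * w i| := abs_sum_le_sum_abs _ _
    _ ≤ ∑ i, |x i| * M := by
      gcongr with i
      rw [abs_mul]
      exact mul_le_mul_of_nonneg_left (hw i) (abs_nonneg _)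
    _ = (∑ i, |x i|) * M := (sum_mul ..).symm

theorem sum_abs_le_sqrt_card_mul_sqrt_sum_sq (x : ι → ℝ) (S : Finset ι) :
    ∑ i ∈ S, |x i| ≤ √(#S : ℝ) * √(∑ i, x i ^ 2) := by
  rw [← Real.sqrt_mul (Nat.cast_nonneg _)]
  refine Real.le_sqrt_of_sq_le ?_
  calc (∑ i ∈ S, |x i|) ^ 2 ≤ (#S : ℝ) * ∑ i ∈ S, |x i| ^ 2 := sq_sum_le_card_mul_sum_sq ..
    _ ≤ (#S : ℝ) * ∑ i, x i ^ 2 := by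
      simp only [sq_abs]
      gcongr
      exact subset_univ S

variable [DecidableEq ι]

theorem sum_abs_sub_sum_abs_le_of_eq_zero_of_notMem {β₀ b : ι → ℝ} {S : Finset ι}
    (hS : ∀ i ∉ S, β₀ i = 0) :
    ∑ i, |β₀ i| - ∑ i, |b i| ≤ ∑ i ∈ S, |β₀ i - b i| - ∑ i ∈ Sᶜ, |β₀ i - b i| := by
  rw [← sum_sub_distrib, ← sum_add_sum_compl S, sub_eq_add_neg, ← sum_neg_distrib]
  gcongr with i _ i hi
  · exact abs_sub_abs_le_abs_sub _ _
  · simp [hS i (mem_compl.mp hi)]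

/-- As the prediction error is nonnegative, this puts `Δ` in the cone `‖Δ_{Sᶜ}‖₁ ≤ 3‖Δ_S‖₁`. -/
theorem lasso_prediction_error_add_le {c γ : ℝ} {y u : τ → κ → ℝ} {Z : τ → Matrix ι κ ℝ}
    {β₀ βhat : ι → ℝ} {S : Finset ι} (hS : ∀ i ∉ S, β₀ i = 0)
    (hmodel : ∀ t, y t = vecMul β₀ (Z t) + u t)
    (hmin : c * ∑ t, ∑ j, (y t j - vecMul βhat (Z t) j) ^ 2 + γ * ∑ i, |βhat i|
      ≤ c * ∑ t, ∑ j, (y t j - vecMul β₀ (Z t) j) ^ 2 + γ * ∑ i, |β₀ i|)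
    (hdual : ∀ i, |c * ∑ t, (Z t *ᵥ u t) i| ≤ γ / 4) (hγ : 0 ≤ γ) :
    c * ∑ t, ∑ j, (vecMul (β₀ - βhat) (Z t) j) ^ 2 + γ / 2 * ∑ i ∈ Sᶜ, |β₀ i - βhat i|
      ≤ 3 * γ / 2 * ∑ i ∈ S, |β₀ i - βhat i| := by
  have hbasic := lasso_basic_inequality hmodel hmin
  have hnoise := (abs_le.mp (abs_dotProduct_le_sum_abs_mul (x := β₀ - βhat) hdual)).1
  have hpenalty := mul_le_mul_of_nonneg_left
    (sum_abs_sub_sum_abs_le_of_eq_zero_of_notMem (b := βhat) hS) hγ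
  have hsplit := sum_add_sum_compl S fun i => |β₀ i - βhat i|
  simp only [Pi.sub_apply] at hnoise
  rw [← hsplit] at hnoise
  linarith

end

theorem le_div_of_mul_sq_le_mul {a b r : ℝ} (ha : 0 < a) (hb : 0 ≤ b) (hr : 0 ≤ r)
    (h : a * r ^ 2 ≤ b * r) : r ≤ b / a := by
  rw [le_div_iff₀ ha]
  rcases hr.eq_or_lt with rfl | hr
  · simpa using hb
  · nlinarith

theorem stmt11_general {n m d : ℕ}
    (y : Fin n → Fin m → ℝ) (Z : Fin n → Matrix (Fin d) (Fin m) ℝ)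
    (u : Fin n → Fin m → ℝ) (β₀ βhat : Fin d → ℝ) (γ α : ℝ) (hγ : 0 < γ) (hα : 0 < α)
    (S : Finset (Fin d)) (hS : ∀ i, i ∈ S ↔ β₀ i ≠ 0)
    (hmodel : ∀ t, y t = Matrix.vecMul β₀ (Z t) + u t)
    (hmin : ∀ b : Fin d → ℝ,
      (1 / (n : ℝ)) * ∑ t, ∑ j, (y t j - Matrix.vecMul βhat (Z t) j) ^ 2
          + γ * ∑ i, |βhat i|
        ≤ (1 / (n : ℝ)) * ∑ t, ∑ j, (y t j - Matrix.vecMul b (Z t) j) ^ 2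
          + γ * ∑ i, |b i|)
    (hdual : ∀ i, |(1 / (n : ℝ)) * ∑ t, ((Z t) *ᵥ (u t)) i| ≤ γ / 4)
    (hRE : ∀ a : Fin d → ℝ, (∑ i ∈ Sᶜ, |a i| ≤ 3 * ∑ i ∈ S, |a i|) →
      (α / 2) * ∑ i, (a i) ^ 2
        ≤ (1 / (n : ℝ)) * ∑ t, ∑ j, (Matrix.vecMul a (Z t) j) ^ 2) :
    Real.sqrt (∑ i, (β₀ i - βhat i) ^ 2) ≤ 3 * γ * Real.sqrt (S.card) / α ∧
    ∑ i, |β₀ i - βhat i| ≤ 12 * γ * S.card / α := by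
  have hkey := lasso_prediction_error_add_le (fun i hi => not_ne_iff.mp (mt (hS i).mpr hi))
    hmodel (hmin β₀) hdual hγ.le
  have hpred : 0 ≤ (1 / (n : ℝ)) * ∑ t, ∑ j, (vecMul (β₀ - βhat) (Z t) j) ^ 2 := by positivity
  have hcone : ∑ i ∈ Sᶜ, |β₀ i - βhat i| ≤ 3 * ∑ i ∈ S, |β₀ i - βhat i| :=
    le_of_mul_le_mul_left (by linarith) (half_pos hγ)
  have hRE' := hRE (β₀ - βhat) hcone
  have hCS := sum_abs_le_sqrt_card_mul_sqrt_sum_sq (β₀ - βhat) S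
  simp only [Pi.sub_apply] at hRE' hCS
  set r := √(∑ i, (β₀ i - βhat i) ^ 2)
  have hr : r ^ 2 = ∑ i, (β₀ i - βhat i) ^ 2 := Real.sq_sqrt (by positivity)
  have hL2 : r ≤ 3 * γ * √(#S : ℝ) / α := by
    refine le_div_of_mul_sq_le_mul hα (by positivity) (Real.sqrt_nonneg _) ?_
    have hB : 0 ≤ γ / 2 * ∑ i ∈ Sᶜ, |β₀ i - βhat i| := by positivity
    rw [hr]
    linarith [mul_le_mul_of_nonneg_left hCS hγ.le]
  refine ⟨hL2, ?_⟩
  have hs : √(#S : ℝ) * √(#S : ℝ) = #S := Real.mul_self_sqrt (Nat.cast_nonneg _)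
  calc ∑ i, |β₀ i - βhat i| ≤ 4 * (√(#S : ℝ) * r) := by
        rw [← sum_add_sum_compl S]
        linarith
    _ ≤ 4 * (√(#S : ℝ) * (3 * γ * √(#S : ℝ) / α)) := by gcongr
    _ = 12 * γ * (√(#S : ℝ) * √(#S : ℝ)) / α := by ring
    _ = 12 * γ * #S / α := by rw [hs]

/-- LASSO ℓ₂/ℓ₁ error bounds under a restricted eigenvalue condition:
in the basic LASSO setting, if additionally
`(1/n)∑_t‖Z_t^⊤a‖₂² ≥ (α/2)‖a‖₂²` for every `a` in the cone
`{a : ‖a_{S^c}‖₁ ≤ 3‖a_S‖₁}`, then `‖β₀−β̂‖₂ ≤ 3γ√s/α` and `‖β₀−β̂‖₁ ≤ 12γs/α`,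
where `s = |S|`. -/
theorem stmt11 {n m d : ℕ} (hn : 0 < n)
    (y : Fin n → Fin m → ℝ) (Z : Fin n → Matrix (Fin d) (Fin m) ℝ)
    (u : Fin n → Fin m → ℝ) (β₀ βhat : Fin d → ℝ) (γ α : ℝ) (hγ : 0 < γ) (hα : 0 < α)
    (S : Finset (Fin d)) (hS : ∀ i, i ∈ S ↔ β₀ i ≠ 0)
    (hmodel : ∀ t, y t = Matrix.vecMul β₀ (Z t) + u t)
    (hmin : ∀ b : Fin d → ℝ,
      (1 / (n : ℝ)) * ∑ t, ∑ j, (y t j - Matrix.vecMul βhat (Z t) j) ^ 2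
          + γ * ∑ i, |βhat i|
        ≤ (1 / (n : ℝ)) * ∑ t, ∑ j, (y t j - Matrix.vecMul b (Z t) j) ^ 2
          + γ * ∑ i, |b i|)
    (hdual : ∀ i, |(1 / (n : ℝ)) * ∑ t, ((Z t) *ᵥ (u t)) i| ≤ γ / 4)
    (hRE : ∀ a : Fin d → ℝ, (∑ i ∈ Sᶜ, |a i| ≤ 3 * ∑ i ∈ S, |a i|) →
      (α / 2) * ∑ i, (a i) ^ 2
        ≤ (1 / (n : ℝ)) * ∑ t, ∑ j, (Matrix.vecMul a (Z t) j) ^ 2) :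
    Real.sqrt (∑ i, (β₀ i - βhat i) ^ 2) ≤ 3 * γ * Real.sqrt (S.card) / α ∧
    ∑ i, |β₀ i - βhat i| ≤ 12 * γ * S.card / α :=
  stmt11_general y Z u β₀ βhat γ α hγ hα S hS hmodel hmin hdual hRE
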